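/- arXiv:1101.2194 — 10 statements merged into one kernel-verified Lean document; each statement's English description precedes it below -/
import Mathlib

section
/- If G is a Roelcke precompact topological group and H ≤ G is an open subgroup, then H (with the subspace topology) is Roelcke precompact. -/
open Pointwise

/-- A topological group is Roelcke precompact if for every neighborhood `U` of the identity
there is a finite set `F` with `G = U F U`. -/
def RoelckePrecompact (G : Type*) [Group G] [TopologicalSpace G] : Prop :=
  ∀ U ∈ nhds (1 : G), ∃ F : Finset G, U * (F : Set G) * U = Set.univ

/-! If `V ⊆ H` is a neighbourhood of `1` and `G = V F V`, then every `h ∈ H` is `v f w` with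
`v, w ∈ V ⊆ H`, which forces `f ∈ H`; hence `H = V (F ∩ H) V`. -/

open Set

theorem Subgroup.subtype_preimage_mul_mul {G : Type*} [Group G] (H : Subgroup G) {A C : Set G}
    (hA : A ⊆ H) (hC : C ⊆ H) (B : Set G) :
    ((↑) : H → G) ⁻¹' (A * B * C) = (↑) ⁻¹' A * (↑) ⁻¹' B * (↑) ⁻¹' C := by
  refine Subset.antisymm ?_ ?_
  · rintro x ⟨_, ⟨a, ha, b, hb, rfl⟩, c, hc, hx⟩
    have hbH : b ∈ H := by
      have hb_eq : b = a⁻¹ * x * c⁻¹ := by rw [← hx]; group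
      rw [hb_eq]
      exact H.mul_mem (H.mul_mem (H.inv_mem (hA ha)) x.2) (H.inv_mem (hC hc))
    exact ⟨⟨a, hA ha⟩ * ⟨b, hbH⟩, ⟨⟨a, hA ha⟩, ha, ⟨b, hbH⟩, hb, rfl⟩, ⟨c, hC hc⟩, hc,
      Subtype.ext hx⟩
  · exact (mul_subset_mul_right (preimage_mul_preimage_subset H.subtype)).trans
      (preimage_mul_preimage_subset H.subtype)

theorem roelckePrecompact_openSubgroup_general {G : Type*} [Group G] [TopologicalSpace G]
    (hG : RoelckePrecompact G) (H : Subgroup G)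
    (hH : IsOpen (H : Set G)) : RoelckePrecompact H := by
  intro U hU
  rw [nhds_induced] at hU
  obtain ⟨W, hW, hWU⟩ := hU
  obtain ⟨F, hF⟩ := hG (W ∩ H) (Filter.inter_mem hW (hH.mem_nhds H.one_mem))
  have hVU : ((↑) : H → G) ⁻¹' (W ∩ H) ⊆ U := (preimage_mono inter_subset_left).trans hWU
  refine ⟨F.preimage _ Subtype.val_injective.injOn, eq_univ_of_univ_subset ?_⟩
  calc univ = ((↑) : H → G) ⁻¹' ((W ∩ H) * F * (W ∩ H)) := by rw [hF, preimage_univ]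
    _ = (↑) ⁻¹' (W ∩ H) * (↑) ⁻¹' (F : Set G) * (↑) ⁻¹' (W ∩ H) :=
      H.subtype_preimage_mul_mul inter_subset_right inter_subset_right _
    _ ⊆ U * _ * U := by rw [Finset.coe_preimage]; gcongr

theorem roelckePrecompact_openSubgroup {G : Type*} [Group G] [TopologicalSpace G]
    [IsTopologicalGroup G] (hG : RoelckePrecompact G) (H : Subgroup G)
    (hH : IsOpen (H : Set G)) : RoelckePrecompact H :=
  roelckePrecompact_openSubgroup_general hG H hH
end

section
/- If N is a closed normal subgroup of a topological group G such that both N (with the subspace topology) and the quotient G/N are Roelcke precompact, then G is Roelcke precompact. -/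
open Pointwise

/-!
Given a neighbourhood `U` of `1`, pick `V` with `V V ⊆ U`. Roelcke precompactness of `G ⧸ N`
gives a finite `F` with `G = V F N V`. For each `f ∈ F`, Roelcke precompactness of `N`, applied
to a neighbourhood of `1` in `N` small enough that its `f`-conjugate lies in `V`, covers `f N`
by `V E_f V` with `E_f` finite. Hence `G ⊆ V V E V V ⊆ U E U` with `E = ⋃ E_f`.
-/

open Set

namespace RoelckePrecompact

variable {G : Type*} [Group G] [TopologicalSpace G]

theorem exists_subgroup_subset_mul_finset_mul {H : Subgroup G} (hH : RoelckePrecompact H)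
    {V : Set G} (hV : V ∈ nhds 1) : ∃ E : Finset G, (H : Set G) ⊆ V * E * V := by
  classical
  obtain ⟨E, hE⟩ := hH (H.subtype ⁻¹' V)
    (continuous_subtype_val.continuousAt.preimage_mem_nhds (by simpa using hV))
  refine ⟨E.image H.subtype, ?_⟩
  calc (H : Set G) = H.subtype '' (H.subtype ⁻¹' V * E * H.subtype ⁻¹' V) := by
        rw [hE, image_univ, Subgroup.coe_subtype, Subtype.range_coe]
    _ = H.subtype '' (H.subtype ⁻¹' V) * E.image H.subtype * H.subtype '' (H.subtype ⁻¹' V) := by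
        rw [image_mul, image_mul, Finset.coe_image]
    _ ⊆ V * E.image H.subtype * V := by gcongr <;> exact image_preimage_subset _ _

variable [SeparatelyContinuousMul G]

theorem exists_smul_subgroup_subset_mul_finset_mul {H : Subgroup G} (hH : RoelckePrecompact H)
    {V : Set G} (hV : V ∈ nhds 1) (f : G) : ∃ E : Finset G, f • (H : Set G) ⊆ V * E * V := by
  classical
  have hconj : (fun x => f * x * f⁻¹) ⁻¹' V ∈ nhds 1 :=
    ((continuous_mul_const _).comp (continuous_const_mul f)).continuousAt.preimage_mem_nhds
      (by simpa using hV)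
  obtain ⟨E, hE⟩ := hH.exists_subgroup_subset_mul_finset_mul (Filter.inter_mem hV hconj)
  refine ⟨f • E, ?_⟩
  rintro _ ⟨x, hx, rfl⟩
  obtain ⟨_, ⟨a, ha, e, he, rfl⟩, b, hb, rfl⟩ := hE hx
  -- `f (a e b) = (f a f⁻¹) (f e) b`
  refine ⟨_, ⟨f * a * f⁻¹, ha.2, f * e, ?_, rfl⟩, b, hb.1, by simp [mul_assoc]⟩
  rw [Finset.coe_smul_finset]
  exact smul_mem_smul_set he

theorem exists_finset_mul_subgroup_subset_mul_finset_mul {H : Subgroup G}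
    (hH : RoelckePrecompact H) {V : Set G} (hV : V ∈ nhds 1) (F : Finset G) :
    ∃ E : Finset G, (F : Set G) * H ⊆ V * E * V := by
  classical
  choose E hE using hH.exists_smul_subgroup_subset_mul_finset_mul hV
  refine ⟨F.biUnion E, ?_⟩
  rintro _ ⟨f, hf, h, hh, rfl⟩
  have hsub : (E f : Set G) ⊆ F.biUnion E := by
    exact_mod_cast Finset.subset_biUnion_of_mem E hf
  exact mul_subset_mul_right (mul_subset_mul_left hsub) (hE f ⟨h, hh, rfl⟩)

theorem exists_mul_finset_mul_subgroup_mul_eq_univ {N : Subgroup G} [N.Normal]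
    (hQ : RoelckePrecompact (G ⧸ N)) {V : Set G} (hV : V ∈ nhds 1) :
    ∃ F : Finset G, V * ((F : Set G) * (N : Set G)) * V = univ := by
  classical
  obtain ⟨Fq, hFq⟩ := hQ _ (QuotientGroup.isOpenMap_coe.image_mem_nhds hV)
  refine ⟨Fq.image Quotient.out, eq_univ_of_forall fun g => ?_⟩
  obtain ⟨_, ⟨_, ⟨v, hv, rfl⟩, q, hq, rfl⟩, _, ⟨w, hw, rfl⟩, hg⟩ :=
    hFq.symm ▸ mem_univ (g : G ⧸ N)
  have hn : (v * q.out)⁻¹ * g * w⁻¹ ∈ N := by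
    rw [← QuotientGroup.eq_one_iff]
    simp [← hg, mul_assoc]
  refine ⟨_, ⟨v, hv, _, ⟨q.out, Finset.mem_image_of_mem _ hq, _, hn, rfl⟩, rfl⟩, w, hw, ?_⟩
  group

end RoelckePrecompact

theorem roelckePrecompact_of_extension_general {G : Type*} [Group G] [TopologicalSpace G]
    [IsTopologicalGroup G] (N : Subgroup G) [N.Normal]
    (hN : RoelckePrecompact N) (hQ : RoelckePrecompact (G ⧸ N)) :
    RoelckePrecompact G := by
  intro U hU
  obtain ⟨V, hVopen, hV1, hVU⟩ := exists_open_nhds_one_mul_subset hU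
  have hV : V ∈ nhds 1 := hVopen.mem_nhds hV1
  obtain ⟨F, hF⟩ := hQ.exists_mul_finset_mul_subgroup_mul_eq_univ hV
  obtain ⟨E, hE⟩ := hN.exists_finset_mul_subgroup_subset_mul_finset_mul hV F
  refine ⟨E, eq_univ_of_univ_subset ?_⟩
  calc univ = V * ((F : Set G) * (N : Set G)) * V := hF.symm
    _ ⊆ V * (V * (E : Set G) * V) * V := by gcongr
    _ = V * V * (E : Set G) * (V * V) := by simp only [mul_assoc]
    _ ⊆ U * (E : Set G) * U := by gcongr

theorem roelckePrecompact_of_extension {G : Type*} [Group G] [TopologicalSpace G]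
    [IsTopologicalGroup G] (N : Subgroup G) [N.Normal] (hclosed : IsClosed (N : Set G))
    (hN : RoelckePrecompact N) (hQ : RoelckePrecompact (G ⧸ N)) :
    RoelckePrecompact G :=
  roelckePrecompact_of_extension_general N hN hQ
end

section
/- Every Roelcke precompact topological group has property (OB): whenever G acts separately continuously by isometries on a metric space, every orbit is bounded. -/
open Pointwise

/-!
The displacement `g ↦ d(g • x, x)` of an isometric action is subadditive, so the set of group
elements moving `x` a bounded distance is closed under products. It contains the finite set `F`
and the neighbourhood `U = {g | d(g • x, x) < 1}` of the identity given by continuity, hence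
`U F U = G`.
-/

open Bornology Metric

section IsometricAction

variable {G X : Type*} [Group G] [PseudoMetricSpace X] [MulAction G X]

theorem dist_mul_smul_le (hiso : ∀ g : G, Isometry fun x : X => g • x) (g h : G) (x : X) :
    dist ((g * h) • x) x ≤ dist (h • x) x + dist (g • x) x :=
  calc dist ((g * h) • x) x ≤ dist (g • h • x) (g • x) + dist (g • x) x := by
        rw [mul_smul]; exact dist_triangle _ _ _
    _ = dist (h • x) x + dist (g • x) x := by rw [(hiso g).dist_eq]

theorem isBounded_image_smul_mul (hiso : ∀ g : G, Isometry fun x : X => g • x) (x : X)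
    {s t : Set G} (hs : IsBounded ((· • x) '' s)) (ht : IsBounded ((· • x) '' t)) :
    IsBounded ((· • x) '' (s * t)) := by
  obtain ⟨r, hr⟩ := (isBounded_iff_subset_closedBall x).1 hs
  obtain ⟨r', hr'⟩ := (isBounded_iff_subset_closedBall x).1 ht
  refine (isBounded_iff_subset_closedBall x).2 ⟨r' + r, ?_⟩
  rintro _ ⟨_, ⟨g, hg, h, hh, rfl⟩, rfl⟩
  exact (dist_mul_smul_le hiso g h x).trans (add_le_add (hr' ⟨h, hh, rfl⟩) (hr ⟨g, hg, rfl⟩))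

end IsometricAction

theorem roelckePrecompact_propertyOB_general {G : Type*} [Group G] [TopologicalSpace G]
    (hG : RoelckePrecompact G)
    {X : Type*} [MetricSpace X] [MulAction G X]
    (hiso : ∀ g : G, Isometry fun x : X => g • x)
    (hcont : ∀ x : X, Continuous fun g : G => g • x) :
    ∀ x : X, Bornology.IsBounded (MulAction.orbit G x) := by
  intro x
  set U : Set G := (· • x) ⁻¹' ball x 1
  have hU : U ∈ nhds (1 : G) :=
    (hcont x).continuousAt.preimage_mem_nhds (by simpa only [one_smul] using ball_mem_nhds x one_pos)
  have hUb : IsBounded ((· • x) '' U) := isBounded_ball.subset (Set.image_preimage_subset _ _)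
  obtain ⟨F, hF⟩ := hG U hU
  have hFb : IsBounded ((· • x) '' (F : Set G)) := (F.finite_toSet.image _).isBounded
  have hUFU := isBounded_image_smul_mul hiso x (isBounded_image_smul_mul hiso x hUb hFb) hUb
  rwa [hF, Set.image_univ] at hUFU

/-- Every Roelcke precompact topological group has property (OB): every separately
continuous action by isometries on a metric space has bounded orbits. -/
theorem roelckePrecompact_propertyOB {G : Type*} [Group G] [TopologicalSpace G]
    [IsTopologicalGroup G] (hG : RoelckePrecompact G)
    {X : Type*} [MetricSpace X] [MulAction G X]
    (hiso : ∀ g : G, Isometry fun x : X => g • x)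
    (hcont : ∀ x : X, Continuous fun g : G => g • x) :
    ∀ x : X, Bornology.IsBounded (MulAction.orbit G x) :=
  roelckePrecompact_propertyOB_general hG hiso hcont
end

section
/- Every oligomorphic closed subgroup of the permutation group of a countable set has only countably many distinct open subgroups. -/
open Pointwise

/-- The topology of pointwise convergence on the permutation group of a (discrete) set:
induced by the embedding `g ↦ (g, g⁻¹)` into `(X → X) × (X → X)` with `X` discrete. -/
instance permPointwiseTopology (X : Type*) : TopologicalSpace (Equiv.Perm X) :=
  letI : TopologicalSpace X := ⊥
  TopologicalSpace.induced
    (fun g : Equiv.Perm X => ((g : X → X), ((g⁻¹ : Equiv.Perm X) : X → X)))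
    inferInstance

section Aux

lemma exists_stab {X : Type*} (G : Subgroup (Equiv.Perm X)) (V : Subgroup G)
    (hV : IsOpen (V : Set G)) :
    ∃ (n : ℕ) (s : Fin n → X), ∀ g : G, (∀ i, (g : Equiv.Perm X) (s i) = s i) → g ∈ V := by
  letI : TopologicalSpace X := ⊥
  haveI : DiscreteTopology X := ⟨rfl⟩
  rw [isOpen_induced_iff] at hV
  obtain ⟨U, hU, hUV⟩ := hV
  have h1U : (1 : Equiv.Perm X) ∈ U := by
    have h1 : (1 : G) ∈ Subtype.val ⁻¹' U := by
      rw [hUV]; exact V.one_mem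
    exact h1
  set F := (fun g : Equiv.Perm X => ((g : X → X), ((g⁻¹ : Equiv.Perm X) : X → X))) with hF
  have hnhds : U ∈ Filter.comap F (nhds (F 1)) := by
    have : nhds (1 : Equiv.Perm X) = Filter.comap F (nhds (F 1)) := nhds_induced F 1
    rw [← this]
    exact hU.mem_nhds h1U
  obtain ⟨W, hW, hWU⟩ := hnhds
  rw [nhds_prod_eq, Filter.mem_prod_iff] at hW
  obtain ⟨s₁, hs₁, s₂, hs₂, hsub⟩ := hW
  rw [nhds_pi, Filter.mem_pi] at hs₁ hs₂
  obtain ⟨I₁, hI₁fin, t₁, ht₁, hts₁⟩ := hs₁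
  obtain ⟨I₂, hI₂fin, t₂, ht₂, hts₂⟩ := hs₂
  simp only [nhds_discrete, Filter.mem_pure] at ht₁ ht₂
  have ht₁' : ∀ i : X, i ∈ t₁ i := by simpa using ht₁
  have ht₂' : ∀ i : X, i ∈ t₂ i := by simpa using ht₂
  have hAfin : (I₁ ∪ I₂ : Set X).Finite := hI₁fin.union hI₂fin
  obtain ⟨n, f, hf⟩ := hAfin.fin_embedding
  refine ⟨n, f, fun g hg => ?_⟩
  have hfix : ∀ a ∈ I₁ ∪ I₂, (g : Equiv.Perm X) a = a := by
    intro a ha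
    rw [← hf] at ha
    obtain ⟨i, rfl⟩ := ha
    exact hg i
  have hgU : (g : Equiv.Perm X) ∈ U := by
    apply hWU
    apply hsub
    constructor
    · apply hts₁
      intro a ha
      show (g : Equiv.Perm X) a ∈ t₁ a
      rw [hfix a (Or.inl ha)]
      exact ht₁' a
    · apply hts₂
      intro b hb
      show ((g : Equiv.Perm X)⁻¹ : Equiv.Perm X) b ∈ t₂ b
      have hbb : ((g : Equiv.Perm X)⁻¹ : Equiv.Perm X) b = b := by
        have := hfix b (Or.inr hb)
        conv_lhs => rw [← this]
        simp
      rw [hbb]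
      exact ht₂' b
  have hmem : g ∈ Subtype.val ⁻¹' U := hgU
  rwa [hUV] at hmem


variable {X : Type*} (G : Subgroup (Equiv.Perm X))

lemma smul_apply'' {n : ℕ} (g : G) (s : Fin n → X) (i : Fin n) :
    (g • s) i = (g : Equiv.Perm X) (s i) := by
  simp [Pi.smul_apply, Subgroup.smul_def, Equiv.Perm.smul_def]

/-- The invariant relation associated with an overgroup `V` of the stabilizer of `s`. -/
def Erel (V : Subgroup G) (n : ℕ) (s : Fin n → X) : Set ((Fin n → X) × (Fin n → X)) :=
  {p | ∃ h v : G, v ∈ V ∧ (h * v) • s = p.1 ∧ h • s = p.2}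

lemma Erel_invariant (V : Subgroup G) (n : ℕ) (s : Fin n → X) (g : G)
    (p : (Fin n → X) × (Fin n → X)) (hp : p ∈ Erel G V n s) : g • p ∈ Erel G V n s := by
  obtain ⟨h, v, hv, h1, h2⟩ := hp
  refine ⟨g * h, v, hv, ?_, ?_⟩
  · show (g * h * v) • s = g • p.1
    rw [mul_assoc, mul_smul, h1]
  · show (g * h) • s = g • p.2
    rw [mul_smul, h2]

lemma mem_iff_Erel (V : Subgroup G) (n : ℕ) (s : Fin n → X)
    (hstab : ∀ g : G, (∀ i, (g : Equiv.Perm X) (s i) = s i) → g ∈ V) (g : G) :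
    g ∈ V ↔ (g • s, s) ∈ Erel G V n s := by
  constructor
  · intro hg
    exact ⟨1, g, hg, by simp, by simp⟩
  · rintro ⟨h, v, hv, h1, h2⟩
    have memstab : ∀ w : G, w • s = s → w ∈ V := by
      intro w hw
      refine hstab w fun i => ?_
      rw [← smul_apply'' G w s i, hw]
    have hh : h ∈ V := memstab h h2
    have h3 : (g⁻¹ * (h * v)) • s = s := by
      rw [mul_smul, h1]
      simp
    have h4 : g⁻¹ * (h * v) ∈ V := memstab _ h3
    have h5 : h * v ∈ V := V.mul_mem hh hv
    have : g⁻¹ ∈ V := by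
      have := V.mul_mem h4 (V.inv_mem h5)
      simpa [mul_assoc] using this
    simpa using V.inv_mem this

lemma mem_image_Erel_iff (V : Subgroup G) (n : ℕ) (s : Fin n → X)
    (p : (Fin n → X) × (Fin n → X)) :
    (Quotient.mk'' p : MulAction.orbitRel.Quotient G ((Fin n → X) × (Fin n → X)))
      ∈ Quotient.mk'' '' Erel G V n s ↔ p ∈ Erel G V n s := by
  constructor
  · rintro ⟨q, hq, heq⟩
    have hrel : q ∈ MulAction.orbit G p := by
      rw [← MulAction.orbitRel_apply]
      exact Quotient.eq''.mp heq
    obtain ⟨gg, hg⟩ := hrel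
    have : p = gg⁻¹ • q := by rw [← hg]; simp
    rw [this]
    exact Erel_invariant G V n s gg⁻¹ q hq
  · exact fun hp => Set.mem_image_of_mem _ hp

lemma finiteQ (holig : ∀ n : ℕ, Finite (MulAction.orbitRel.Quotient G (Fin n → X))) (n : ℕ) :
    Finite (MulAction.orbitRel.Quotient G ((Fin n → X) × (Fin n → X))) := by
  haveI := holig (n + n)
  set φ : (Fin (n + n) → X) → (Fin n → X) × (Fin n → X) :=
    fun t => (fun i => t (Fin.castAdd n i), fun i => t (Fin.natAdd n i)) with hφ
  have hsurj : Function.Surjective φ := by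
    rintro ⟨x, y⟩
    refine ⟨Fin.append x y, ?_⟩
    simp only [hφ]
    congr 1 <;> funext i
    · exact Fin.append_left x y i
    · exact Fin.append_right x y i
  have hequiv : ∀ (g : G) (t : Fin (n + n) → X), φ (g • t) = g • φ t := by
    intro g t
    rfl
  let F : MulAction.orbitRel.Quotient G (Fin (n + n) → X) →
      MulAction.orbitRel.Quotient G ((Fin n → X) × (Fin n → X)) :=
    Quotient.map' φ (by
      intro a b hab
      have : a ∈ MulAction.orbit G b := by rwa [← MulAction.orbitRel_apply]
      obtain ⟨g, hg⟩ := this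
      show φ a ∈ MulAction.orbit G (φ b)
      exact ⟨g, by rw [← hg, hequiv]⟩)
  have hFsurj : Function.Surjective F := by
    intro q
    induction q using Quotient.inductionOn' with
    | h p =>
      obtain ⟨t, ht⟩ := hsurj p
      exact ⟨Quotient.mk'' t, by simp [F, Quotient.map'_mk'', ht]⟩
  exact Finite.of_surjective F hFsurj

end Aux

/-- An oligomorphic closed subgroup of the permutation group of a countable set has only
countably many open subgroups. -/
theorem countable_open_subgroups_of_oligomorphic {X : Type*} [Countable X]
    (G : Subgroup (Equiv.Perm X)) (hclosed : IsClosed (G : Set (Equiv.Perm X)))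
    (holig : ∀ n : ℕ, Finite (MulAction.orbitRel.Quotient G (Fin n → X))) :
    {V : Subgroup G | IsOpen (V : Set G)}.Countable := by
  have hQ := finiteQ G holig
  have hsub : {V : Subgroup G | IsOpen (V : Set G)} ⊆
      ⋃ (n : ℕ) (s : Fin n → X),
        {V : Subgroup G | ∀ g : G, (∀ i, (g : Equiv.Perm X) (s i) = s i) → g ∈ V} := by
    intro V hV
    obtain ⟨n, s, hs⟩ := exists_stab G V hV
    exact Set.mem_iUnion.mpr ⟨n, Set.mem_iUnion.mpr ⟨s, hs⟩⟩
  refine Set.Countable.mono hsub ?_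
  refine Set.countable_iUnion fun n => Set.countable_iUnion fun s => ?_
  haveI := hQ n
  have hfin : {V : Subgroup G | ∀ g : G, (∀ i, (g : Equiv.Perm X) (s i) = s i) → g ∈ V}.Finite := by
    apply Set.Finite.of_finite_image (f := fun V : Subgroup G =>
      (Quotient.mk'' '' Erel G V n s :
        Set (MulAction.orbitRel.Quotient G ((Fin n → X) × (Fin n → X)))))
    · exact Set.toFinite _
    · intro V hV W hW hEq
      simp only at hEq
      ext g
      rw [mem_iff_Erel G V n s hV g, mem_iff_Erel G W n s hW g,
        ← mem_image_Erel_iff, ← mem_image_Erel_iff, hEq]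
  exact hfin.countable
end

section
/- Let G be a Roelcke precompact topological group with a basis of open subgroups at the identity, and let V ≤ G be an open subgroup. Then for every x ∈ G, the double coset VxV contains finitely many left cosets of V if and only if it contains finitely many right cosets of V. -/
/-!
Let `M` be the set of `t` for which `VtV` is a finite union of left cosets of `V`. It is a
submonoid containing `V` and a union of double cosets, so Roelcke precompactness covers `M` by
finitely many left cosets of `V`. For `t ∈ M` two powers `t ^ m`, `t ^ (m + k + 1)` then lie in the
same left coset, so `t ^ (k + 1) ∈ V` and `t⁻¹ = t ^ k * (t ^ (k + 1))⁻¹ ∈ M`. Finally, the right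
cosets of `V` in `VxV` are the inverses of the left cosets of `V` in `Vx⁻¹V`.
-/

open Pointwise

namespace Subgroup

variable {G : Type*} [Group G]

theorem finite_image_smul_coe_iff (V : Subgroup G) (Y : Set G) :
    ((fun g : G => g • (V : Set G)) '' Y).Finite ↔ ∃ S : Set G, S.Finite ∧ Y ⊆ S * V := by
  constructor
  · intro hY
    obtain ⟨S, -, hS, hSY⟩ := Set.exists_subset_image_finite_and.1 ⟨_, subset_rfl, hY, rfl⟩
    refine ⟨S, hS, fun y hy => ?_⟩
    obtain ⟨s, hs, hsy⟩ : y • (V : Set G) ∈ (fun g : G => g • (V : Set G)) '' S :=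
      hSY ▸ ⟨y, hy, rfl⟩
    exact ⟨s, hs, s⁻¹ * y, (leftCoset_eq_iff V).1 hsy, mul_inv_cancel_left s y⟩
  · rintro ⟨S, hS, hYS⟩
    refine (hS.image fun g : G => g • (V : Set G)).subset ?_
    rintro _ ⟨y, hy, rfl⟩
    obtain ⟨s, hs, v, hv, rfl⟩ := hYS hy
    exact ⟨s, hs, by simp only [mul_smul, smul_coe_set hv]⟩

theorem finite_image_coe_mul_singleton_iff (V : Subgroup G) (Y : Set G) :
    ((fun g : G => (V : Set G) * {g}) '' Y).Finite ↔
      ((fun g : G => g • (V : Set G)) '' Y⁻¹).Finite := by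
  have hinv : (fun g : G => (V : Set G) * {g}) '' Y =
      Inv.inv '' ((fun g : G => g • (V : Set G)) '' Y⁻¹) := by
    rw [← Set.image_inv_eq_inv, Set.image_image, Set.image_image]
    refine Set.image_congr fun g _ => ?_
    rw [← Set.singleton_smul, smul_eq_mul, mul_inv_rev, inv_coe_set, Set.inv_singleton, inv_inv]
  rw [hinv, Set.finite_image_iff inv_injective.injOn]

theorem inv_coe_mul_singleton_mul_coe (V : Subgroup G) (x : G) :
    ((V : Set G) * {x} * V)⁻¹ = V * {x⁻¹} * V := by
  rw [mul_inv_rev, mul_inv_rev, inv_coe_set, Set.inv_singleton, mul_assoc]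

/-- `t` belongs to `V.finiteCosetSubmonoid` iff `VtV` is a finite union of left cosets of `V`,
i.e. `[V : V ∩ tVt⁻¹] < ∞`. -/
def finiteCosetSubmonoid (V : Subgroup G) : Submonoid G where
  carrier := {t | ∃ S : Set G, S.Finite ∧ (V : Set G) * {t} ⊆ S * V}
  one_mem' := ⟨{1}, Set.finite_singleton 1, by simp⟩
  mul_mem' := by
    rintro t s ⟨S, hS, ht⟩ ⟨S', hS', hs⟩
    refine ⟨S * S', hS.mul hS', ?_⟩
    calc (V : Set G) * {t * s} = V * {t} * {s} := by rw [← Set.singleton_mul_singleton, mul_assoc]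
      _ ⊆ S * V * {s} := Set.mul_subset_mul_right ht
      _ = S * (V * {s}) := mul_assoc _ _ _
      _ ⊆ S * (S' * V) := Set.mul_subset_mul_left hs
      _ = S * S' * V := (mul_assoc _ _ _).symm

variable {V : Subgroup G}

theorem mem_finiteCosetSubmonoid_iff_exists {x : G} :
    x ∈ V.finiteCosetSubmonoid ↔ ∃ S : Set G, S.Finite ∧ (V : Set G) * {x} * V ⊆ S * V := by
  refine exists_congr fun S => and_congr_right fun _ => ⟨fun h => ?_, fun h => ?_⟩
  · calc (V : Set G) * {x} * V ⊆ S * V * V := Set.mul_subset_mul_right h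
      _ = S * V := by rw [mul_assoc, coe_mul_coe]
  · exact (Set.subset_mul_left _ V.one_mem).trans h

theorem mem_finiteCosetSubmonoid_iff {x : G} :
    x ∈ V.finiteCosetSubmonoid ↔
      ((fun g : G => g • (V : Set G)) '' ((V : Set G) * {x} * V)).Finite := by
  rw [mem_finiteCosetSubmonoid_iff_exists, finite_image_smul_coe_iff]

theorem coe_subset_finiteCosetSubmonoid : (V : Set G) ⊆ V.finiteCosetSubmonoid :=
  fun v hv => ⟨{1}, Set.finite_singleton 1, by simp [subgroup_mul_singleton hv]⟩

theorem mem_finiteCosetSubmonoid_of_mem_doubleCoset {t t' : G} (ht : t ∈ V.finiteCosetSubmonoid)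
    (h : t' ∈ DoubleCoset.doubleCoset t V V) : t' ∈ V.finiteCosetSubmonoid := by
  rw [mem_finiteCosetSubmonoid_iff] at ht ⊢
  rwa [← DoubleCoset.doubleCoset, DoubleCoset.doubleCoset_eq_of_mem h]

theorem exists_finite_finiteCosetSubmonoid_subset_mul [TopologicalSpace G]
    (hG : RoelckePrecompact G) (hV : IsOpen (V : Set G)) :
    ∃ S : Set G, S.Finite ∧ (V.finiteCosetSubmonoid : Set G) ⊆ S * V := by
  obtain ⟨F, hF⟩ := hG V (hV.mem_nhds V.one_mem)
  choose! S hS hSV using fun f (hf : f ∈ V.finiteCosetSubmonoid) =>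
    mem_finiteCosetSubmonoid_iff_exists.1 hf
  refine ⟨⋃ f ∈ (F : Set G) ∩ V.finiteCosetSubmonoid, S f,
    (F.finite_toSet.inter_of_left _).biUnion fun f hf => hS f hf.2, fun t ht => ?_⟩
  obtain ⟨_, ⟨a, ha, f, hf, rfl⟩, b, hb, rfl⟩ : t ∈ (V : Set G) * F * V := hF ▸ Set.mem_univ t
  have hfM : f ∈ V.finiteCosetSubmonoid :=
    mem_finiteCosetSubmonoid_of_mem_doubleCoset ht (DoubleCoset.mem_doubleCoset.2
      ⟨a⁻¹, V.inv_mem ha, b⁻¹, V.inv_mem hb, by group⟩)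
  refine Set.mul_subset_mul_right (Set.subset_biUnion_of_mem (u := S)
    (show f ∈ (F : Set G) ∩ V.finiteCosetSubmonoid from ⟨hf, hfM⟩)) (hSV f hfM ?_)
  exact ⟨a * f, ⟨a, ha, f, rfl, rfl⟩, b, hb, rfl⟩

end Subgroup

theorem Submonoid.inv_mem_of_subset_finite_mul {G : Type*} [Group G] {M : Submonoid G}
    {V : Subgroup G} (hVM : (V : Set G) ⊆ M) {S : Set G} (hS : S.Finite)
    (hMS : (M : Set G) ⊆ S * V) {t : G} (ht : t ∈ M) : t⁻¹ ∈ M := by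
  have hpow (n : ℕ) : ∃ s ∈ S, s⁻¹ * t ^ n ∈ V := by
    obtain ⟨s, hs, v, hv, hsv⟩ := hMS (M.pow_mem ht n)
    exact ⟨s, hs, by rwa [← hsv, inv_mul_cancel_left]⟩
  choose s hsS hsV using hpow
  obtain ⟨m, n, hmn, hs⟩ := hS.exists_lt_map_eq_of_forall_mem hsS
  obtain ⟨k, rfl⟩ := Nat.exists_eq_add_of_lt hmn
  have hk : t ^ (k + 1) ∈ V := by
    have h := V.mul_mem (V.inv_mem (hsV m)) (hsV (m + k + 1))
    rwa [hs, mul_inv_rev, inv_inv, mul_assoc, mul_inv_cancel_left, add_assoc, pow_add,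
      inv_mul_cancel_left] at h
  have htinv : t⁻¹ = t ^ k * (t ^ (k + 1))⁻¹ := by group
  exact htinv ▸ M.mul_mem (M.pow_mem ht k) (hVM (V.inv_mem hk))

theorem doubleCoset_finite_left_iff_right_general {G : Type*} [Group G] [TopologicalSpace G]
    (hG : RoelckePrecompact G)
    (V : Subgroup G) (hV : IsOpen (V : Set G)) (x : G) :
    ((fun g : G => g • (V : Set G)) '' ((V : Set G) * {x} * (V : Set G))).Finite ↔
      ((fun g : G => (V : Set G) * {g}) '' ((V : Set G) * {x} * (V : Set G))).Finite := by
  obtain ⟨S, hS, hMS⟩ := V.exists_finite_finiteCosetSubmonoid_subset_mul hG hV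
  have hinv {t : G} (ht : t ∈ V.finiteCosetSubmonoid) : t⁻¹ ∈ V.finiteCosetSubmonoid :=
    Submonoid.inv_mem_of_subset_finite_mul V.coe_subset_finiteCosetSubmonoid hS hMS ht
  rw [V.finite_image_coe_mul_singleton_iff, V.inv_coe_mul_singleton_mul_coe,
    ← Subgroup.mem_finiteCosetSubmonoid_iff, ← Subgroup.mem_finiteCosetSubmonoid_iff]
  exact ⟨hinv, fun h => inv_inv x ▸ hinv h⟩

/-- In a Roelcke precompact group with a basis of open subgroups at the identity, a double
coset `VxV` of an open subgroup `V` contains finitely many left cosets of `V` iff it contains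
finitely many right cosets of `V`. -/
theorem doubleCoset_finite_left_iff_right {G : Type*} [Group G] [TopologicalSpace G]
    [IsTopologicalGroup G]
    (hbasis : ∀ U ∈ nhds (1 : G), ∃ W : Subgroup G, IsOpen (W : Set G) ∧ (W : Set G) ⊆ U)
    (hG : RoelckePrecompact G)
    (V : Subgroup G) (hV : IsOpen (V : Set G)) (x : G) :
    ((fun g : G => g • (V : Set G)) '' ((V : Set G) * {x} * (V : Set G))).Finite ↔
      ((fun g : G => (V : Set G) * {g}) '' ((V : Set G) * {x} * (V : Set G))).Finite :=
  doubleCoset_finite_left_iff_right_general hG V hV x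
end

section
/- Let G be a Roelcke precompact topological group with a basis of open subgroups at the identity, and let V ≤ G be an open subgroup. Then V has finite index in its commensurator Comm_G(V). -/
open Pointwise

/-!
Double cosets `V g V` are the `V`-orbits on `G ⧸ V`, and by orbit–stabilizer the orbit of
`gV` has `[V : V ∩ gVg⁻¹]` points, which is finite when `g` commensurates `V`. Roelcke
precompactness says there are finitely many such orbits. So the image of `Comm_G(V)` in
`G ⧸ V`, which has `[Comm_G(V) : V]` points, is covered by finitely many finite orbits.
-/

open MulAction

theorem Set.Finite.of_forall_finite_orbit {H X : Type*} [Group H] [MulAction H X]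
    [Finite (orbitRel.Quotient H X)] {S : Set X} (hS : ∀ x ∈ S, (orbit H x).Finite) :
    S.Finite := by
  refine ((Set.toFinite (Quotient.mk'' '' S : Set (orbitRel.Quotient H X))).biUnion
    fun ω hω ↦ ?_).subset fun x hx ↦
      Set.mem_biUnion (Set.mem_image_of_mem _ hx) (orbitRel.Quotient.mem_orbit.2 rfl)
  obtain ⟨s, hs, rfl⟩ := hω
  exact hS s hs

section

variable {G : Type*} [Group G]

theorem MulAction.stabilizer_quotient_mk (V : Subgroup G) (g : G) :
    stabilizer G (g : G ⧸ V) = ConjAct.toConjAct g • V := by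
  ext x
  rw [mem_stabilizer_iff, Subgroup.mem_pointwise_smul_iff_inv_smul_mem, ← ConjAct.toConjAct_inv,
    ConjAct.toConjAct_smul, inv_inv, Quotient.smul_coe, smul_eq_mul, eq_comm,
    QuotientGroup.eq, mul_assoc]

theorem Subgroup.relIndex_conj_eq_ncard_orbit (V H : Subgroup G) (g : G) :
    (ConjAct.toConjAct g • V).relIndex H = (orbit H (g : G ⧸ V)).ncard := by
  rw [← index_stabilizer, Subgroup.relIndex, ← stabilizer_quotient_mk]
  rfl

theorem Subgroup.Commensurable.finite_orbit_mk_of_mem_commensurator {V : Subgroup G} {g : G}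
    (hg : g ∈ commensurator V) : (orbit V (g : G ⧸ V)).Finite :=
  Set.finite_of_ncard_ne_zero <| V.relIndex_conj_eq_ncard_orbit V g ▸ hg.1

theorem RoelckePrecompact.finite_orbitRel_quotient [TopologicalSpace G]
    (hG : RoelckePrecompact G) {V : Subgroup G} (hV : IsOpen (V : Set G)) :
    Finite (orbitRel.Quotient V (G ⧸ V)) := by
  obtain ⟨F, hF⟩ := hG _ (hV.mem_nhds V.one_mem)
  refine Finite.of_surjective
    (fun f : F ↦ (Quotient.mk'' ((f : G) : G ⧸ V) : orbitRel.Quotient V (G ⧸ V))) ?_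
  rintro ⟨x⟩
  obtain ⟨x, rfl⟩ := QuotientGroup.mk_surjective x
  obtain ⟨_, ⟨v, hv, f, hf, rfl⟩, w, hw, rfl⟩ : x ∈ (V : Set G) * F * V :=
    hF ▸ Set.mem_univ x
  refine ⟨⟨f, hf⟩, (Quotient.eq''.2 (orbitRel_apply.2 ⟨⟨v, hv⟩, ?_⟩)).symm⟩
  show ((v * f : G) : G ⧸ V) = ((v * f * w : G) : G ⧸ V)
  rw [QuotientGroup.eq, inv_mul_cancel_left]
  exact hw

end

theorem relindex_commensurator_ne_zero_general {G : Type*} [Group G] [TopologicalSpace G]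
    (hG : RoelckePrecompact G)
    (V : Subgroup G) (hV : IsOpen (V : Set G)) :
    V.relIndex (Subgroup.Commensurable.commensurator V) ≠ 0 := by
  set C := Subgroup.Commensurable.commensurator V
  have := hG.finite_orbitRel_quotient hV
  have hfinite : (orbit C ((1 : G) : G ⧸ V)).Finite :=
    Set.Finite.of_forall_finite_orbit (H := V) <| by
      rintro _ ⟨c, rfl⟩
      show (orbit V ((c * 1 : G) : G ⧸ V)).Finite
      rw [mul_one]
      exact Subgroup.Commensurable.finite_orbit_mk_of_mem_commensurator c.2
  have hcard := V.relIndex_conj_eq_ncard_orbit C 1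
  rw [map_one, one_smul] at hcard
  rw [hcard]
  exact Set.ncard_ne_zero_of_mem (mem_orbit_self _) hfinite

/-- In a Roelcke precompact group with a basis of open subgroups at the identity, every open
subgroup has finite index in its commensurator. -/
theorem relindex_commensurator_ne_zero {G : Type*} [Group G] [TopologicalSpace G]
    [IsTopologicalGroup G]
    (hbasis : ∀ U ∈ nhds (1 : G), ∃ W : Subgroup G, IsOpen (W : Set G) ∧ (W : Set G) ⊆ U)
    (hG : RoelckePrecompact G)
    (V : Subgroup G) (hV : IsOpen (V : Set G)) :
    V.relIndex (Subgroup.Commensurable.commensurator V) ≠ 0 :=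
  relindex_commensurator_ne_zero_general hG V hV
end

section
/- Let G be a Roelcke precompact topological group with a basis of open subgroups at the identity and V ≤ G an open subgroup. Then Comm_G(Comm_G(V)) = Comm_G(V); moreover, if V₁, V₂ are open subgroups whose commensurators are commensurate, then Comm_G(V₁) = Comm_G(V₂). -/
open Pointwise

namespace Subgroup

variable {G : Type*} [Group G]

open Commensurable MulAction

theorem mem_conjAct_smul_iff {H : Subgroup G} {g x : G} :
    x ∈ ConjAct.toConjAct g • H ↔ g⁻¹ * x * g ∈ H := by
  rw [mem_pointwise_smul_iff_inv_smul_mem, ← map_inv, ConjAct.toConjAct_smul]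
  group

theorem stabilizer_coe_quotient (H K : Subgroup G) (g : G) :
    stabilizer K (g : G ⧸ H) = (ConjAct.toConjAct g • H).subgroupOf K := by
  ext k
  rw [mem_stabilizer_iff, mem_subgroupOf, mem_conjAct_smul_iff, ← inv_mem_iff]
  show ((k * g : G) : G ⧸ H) = g ↔ _
  rw [QuotientGroup.eq]
  group

theorem le_commensurator (H : Subgroup G) : H ≤ commensurator H := fun h hh => by
  rw [commensurator_mem_iff, show ConjAct.toConjAct h • H = H from conj_smul_eq_self_of_mem hh]

theorem finite_orbit_of_mem_commensurator {H : Subgroup G} {g : G} (hg : g ∈ commensurator H) :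
    (orbit H (g : G ⧸ H)).Finite := by
  apply Set.finite_of_ncard_ne_zero
  rw [← index_stabilizer, stabilizer_coe_quotient]
  exact hg.1

theorem relIndex_ne_zero_of_le_commensurator {H K : Subgroup G} {F : Set G} (hF : F.Finite)
    (hK : K ≤ commensurator H) (hcover : (K : Set G) ⊆ H * F * H) : H.relIndex K ≠ 0 := by
  have hsub : orbit K ((1 : G) : G ⧸ H) ⊆ ⋃ f ∈ F ∩ commensurator H, orbit H (f : G ⧸ H) := by
    rintro _ ⟨k, rfl⟩
    obtain ⟨_, ⟨h, hh, f, hf, rfl⟩, h', hh', hk⟩ := hcover k.2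
    have hfc : f ∈ commensurator H := by
      have : f = h⁻¹ * k * h'⁻¹ := by rw [← hk]; group
      rw [this]
      exact mul_mem (mul_mem (inv_mem (le_commensurator H hh)) (hK k.2))
        (inv_mem (le_commensurator H hh'))
    refine Set.mem_biUnion ⟨hf, hfc⟩ ⟨⟨h, hh⟩, ?_⟩
    show ((h * f : G) : G ⧸ H) = ((k * 1 : G) : G ⧸ H)
    rw [QuotientGroup.eq, ← hk, show (h * f)⁻¹ * (h * f * h' * 1) = h' by group]
    exact hh'
  have hfin : (orbit K ((1 : G) : G ⧸ H)).Finite :=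
    ((hF.inter_of_left _).biUnion fun f hf => finite_orbit_of_mem_commensurator hf.2).subset hsub
  have := index_stabilizer K ((1 : G) : G ⧸ H)
  rw [stabilizer_coe_quotient, map_one, one_smul] at this
  rw [relIndex, this]
  exact (Set.ncard_pos hfin).2 ⟨_, mem_orbit_self _⟩ |>.ne'

theorem commensurable_commensurator {H : Subgroup G} {F : Set G} (hF : F.Finite)
    (hcover : (H : Set G) * F * (H : Set G) = Set.univ) : Commensurable H (commensurator H) := by
  refine ⟨relIndex_ne_zero_of_le_commensurator hF le_rfl (hcover ▸ Set.subset_univ _), ?_⟩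
  rw [relIndex_eq_one.2 (le_commensurator H)]
  exact one_ne_zero

theorem commensurator_commensurator {H : Subgroup G} {F : Set G} (hF : F.Finite)
    (hcover : (H : Set G) * F * (H : Set G) = Set.univ) :
    commensurator (commensurator H) = commensurator H :=
  (Commensurable.eq (commensurable_commensurator hF hcover)).symm

end Subgroup

theorem commensurator_idem_and_unique_general {G : Type*} [Group G] [TopologicalSpace G]
    (hG : RoelckePrecompact G) :
    (∀ V : Subgroup G, IsOpen (V : Set G) →
      Subgroup.Commensurable.commensurator (Subgroup.Commensurable.commensurator V) =
        Subgroup.Commensurable.commensurator V) ∧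
    ∀ V₁ V₂ : Subgroup G, IsOpen (V₁ : Set G) → IsOpen (V₂ : Set G) →
      Subgroup.Commensurable (Subgroup.Commensurable.commensurator V₁) (Subgroup.Commensurable.commensurator V₂) →
      Subgroup.Commensurable.commensurator V₁ = Subgroup.Commensurable.commensurator V₂ := by
  have idem (V : Subgroup G) (hV : IsOpen (V : Set G)) :
      Subgroup.Commensurable.commensurator (Subgroup.Commensurable.commensurator V) =
        Subgroup.Commensurable.commensurator V := by
    obtain ⟨F, hF⟩ := hG V (hV.mem_nhds V.one_mem)
    exact Subgroup.commensurator_commensurator F.finite_toSet hF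
  refine ⟨idem, fun V₁ V₂ h₁ h₂ hc => ?_⟩
  rw [← idem V₁ h₁, ← idem V₂ h₂]
  exact Subgroup.Commensurable.eq hc

/-- In a Roelcke precompact group with a basis of open subgroups at the identity, the
commensurator of an open subgroup is its own commensurator; moreover if the commensurators
of two open subgroups are commensurate, they are equal. -/
theorem commensurator_idem_and_unique {G : Type*} [Group G] [TopologicalSpace G]
    [IsTopologicalGroup G]
    (hbasis : ∀ U ∈ nhds (1 : G), ∃ W : Subgroup G, IsOpen (W : Set G) ∧ (W : Set G) ⊆ U)
    (hG : RoelckePrecompact G) :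
    (∀ V : Subgroup G, IsOpen (V : Set G) →
      Subgroup.Commensurable.commensurator (Subgroup.Commensurable.commensurator V) =
        Subgroup.Commensurable.commensurator V) ∧
    ∀ V₁ V₂ : Subgroup G, IsOpen (V₁ : Set G) → IsOpen (V₂ : Set G) →
      Subgroup.Commensurable (Subgroup.Commensurable.commensurator V₁) (Subgroup.Commensurable.commensurator V₂) →
      Subgroup.Commensurable.commensurator V₁ = Subgroup.Commensurable.commensurator V₂ :=
  commensurator_idem_and_unique_general hG
end

section
/- Let G be a group and V a subgroup. If φ is an extreme point of the convex set P_V(G) = {φ positive definite : φ(1) = 1 and φ(v) = 1 for all v ∈ V}, then φ is an extreme point of P₁(G) = {φ positive definite : φ(1) = 1}. -/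
/-!
Every normalized positive definite function takes its values in the closed unit disc, and `1` is
an extreme point of that disc. Hence if a proper convex combination of `ψ₁, ψ₂ ∈ P₁(G)` is `1` on
`V`, so are `ψ₁` and `ψ₂`: the set `P_V(G)` is a face of `P₁(G)`, and extreme points of a face are
extreme points of the whole set.
-/

open ComplexOrder

/-- A function `φ : G → ℂ` is positive definite if all the matrices `(φ (xⱼ⁻¹ * xᵢ))` are
positive semidefinite (here expressed via the order on `ℂ`: the sums are nonnegative reals). -/
def IsPositiveDefinite {G : Type*} [Group G] (φ : G → ℂ) : Prop :=
  ∀ (n : ℕ) (x : Fin n → G) (c : Fin n → ℂ),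
    0 ≤ ∑ i, ∑ j, φ ((x j)⁻¹ * x i) * c i * (starRingEnd ℂ) (c j)

namespace IsPositiveDefinite

variable {G : Type*} [Group G] {φ : G → ℂ}

lemma map_one_nonneg (h : IsPositiveDefinite φ) : 0 ≤ φ 1 := by
  simpa using h 1 ![1] ![1]

lemma map_inv (h : IsPositiveDefinite φ) (g : G) : φ g⁻¹ = starRingEnd ℂ (φ g) := by
  have h1 := h 2 ![1, g] ![1, 1]
  have hI := h 2 ![1, g] ![1, Complex.I]
  simp only [Fin.sum_univ_two, Complex.le_def] at h1 hI
  simp only [Complex.zero_re, Fin.isValue, Matrix.cons_val_zero, inv_one, mul_one, map_one,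
    Matrix.cons_val_one, Matrix.cons_val_fin_one, one_mul, inv_mul_cancel, Complex.add_re,
    Complex.zero_im, Complex.add_im, Complex.conj_I, mul_neg, Complex.neg_re, Complex.mul_re,
    Complex.I_re, mul_zero, Complex.I_im, zero_sub, neg_neg, Complex.mul_im, add_zero,
    Complex.neg_im] at h1 hI
  have h1_im : 0 = (φ 1).im := (Complex.le_def.mp h.map_one_nonneg).2
  apply Complex.ext <;> simp only [Complex.conj_re, Complex.conj_im] <;> linarith [h1.2, hI.2]

lemma norm_apply_le (h : IsPositiveDefinite φ) (g : G) : ‖φ g‖ ≤ ‖φ 1‖ := by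
  set r := ‖φ g‖
  set p := ‖φ 1‖
  have hp : φ 1 = p := (Complex.norm_of_nonneg' h.map_one_nonneg).symm
  have hr : φ g * starRingEnd ℂ (φ g) = (r ^ 2 : ℝ) := by
    rw [Complex.mul_conj, Complex.normSq_eq_norm_sq]
  -- the vector `(‖φ g‖, -conj (φ g))` makes the quadratic form equal to `2 r² (p - r)`
  have hq := h 2 ![1, g] ![(r : ℂ), -starRingEnd ℂ (φ g)]
  have hsum : ∑ i, ∑ j, φ ((![1, g] j)⁻¹ * ![1, g] i) * ![(r : ℂ), -starRingEnd ℂ (φ g)] i *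
      starRingEnd ℂ (![(r : ℂ), -starRingEnd ℂ (φ g)] j) = ((2 * r ^ 2 * (p - r) : ℝ) : ℂ) := by
    simp only [Fin.sum_univ_two, Fin.isValue, Matrix.cons_val_zero, inv_one, one_mul,
      Complex.conj_ofReal, Matrix.cons_val_one, Matrix.cons_val_fin_one, map_neg,
      RingHomCompTriple.comp_apply, RingHom.id_apply, mul_neg, hp, mul_one, h.map_inv, neg_mul,
      inv_mul_cancel, neg_neg, Complex.ofReal_mul, Complex.ofReal_ofNat, Complex.ofReal_pow,
      Complex.ofReal_sub]
    push_cast at hr ⊢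
    linear_combination ((p : ℂ) - 2 * r) * hr
  rw [hsum, Complex.zero_le_real] at hq
  by_contra! hlt
  have hr_pos : 0 < r := (norm_nonneg _).trans_lt hlt
  nlinarith [mul_pos (pow_pos hr_pos 2) (sub_pos.2 hlt)]

end IsPositiveDefinite

lemma isExtreme_setOf_forall_apply_eq {𝕜 ι E : Type*} [Semiring 𝕜] [PartialOrder 𝕜]
    [AddCommMonoid E] [SMul 𝕜 E] {A : Set (ι → E)} {B : Set E} {S : Set ι} {y : E}
    (hy : y ∈ B.extremePoints 𝕜) (hAB : ∀ f ∈ A, ∀ i ∈ S, f i ∈ B) :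
    IsExtreme 𝕜 A {f ∈ A | ∀ i ∈ S, f i = y} := by
  refine ⟨Set.sep_subset _ _, fun f₁ hf₁ f₂ hf₂ f hf hseg => ⟨hf₁, fun i hi => ?_⟩⟩
  obtain ⟨a, b, ha, hb, hab, rfl⟩ := hseg
  exact hy.2 (hAB f₁ hf₁ i hi) (hAB f₂ hf₂ i hi) ⟨a, b, ha, hb, hab, hf.2 i hi⟩

lemma Complex.one_mem_extremePoints_closedBall :
    (1 : ℂ) ∈ (Metric.closedBall 0 1).extremePoints ℝ :=
  StrictConvexSpace.sphere_subset_extremePoints_closedBall 0 one_ne_zero (by simp)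

/-- An extreme point of the set of normalized positive definite functions which are `1` on a
subgroup `V` is an extreme point of the set of all normalized positive definite functions. -/
theorem extremePoint_PV_extremePoint_P1 {G : Type*} [Group G] (V : Subgroup G) (φ : G → ℂ)
    (hφ : φ ∈ Set.extremePoints ℝ
      {ψ : G → ℂ | IsPositiveDefinite ψ ∧ ψ 1 = 1 ∧ ∀ v ∈ V, ψ v = 1}) :
    φ ∈ Set.extremePoints ℝ {ψ : G → ℂ | IsPositiveDefinite ψ ∧ ψ 1 = 1} := by
  have hface : IsExtreme ℝ {ψ : G → ℂ | IsPositiveDefinite ψ ∧ ψ 1 = 1}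
      {ψ : G → ℂ | IsPositiveDefinite ψ ∧ ψ 1 = 1 ∧ ∀ v ∈ V, ψ v = 1} := by
    convert isExtreme_setOf_forall_apply_eq (S := (V : Set G))
      Complex.one_mem_extremePoints_closedBall ?_ using 1
    · ext ψ
      simp only [Set.mem_ofPred_eq, SetLike.mem_coe, and_assoc]
    · rintro ψ ⟨hψ, hψ1⟩ g -
      simpa [hψ1] using hψ.norm_apply_le g
  exact hface.extremePoints_subset_extremePoints hφ
end

section
/- Let a group G act on a set Y, and suppose there exist Q ⊆ G and ε > 0 such that for every nonnegative f ∈ ℓ¹(Y) with ‖f‖₁ = 1, sup_{g∈Q} ‖g·f − f‖₁ ≥ ε. Then for every n ≥ 1 and every nonnegative f ∈ ℓ¹(Yⁿ) with ‖f‖₁ = 1 (with respect to the diagonal action on Yⁿ), sup_{g∈Q} ‖g·f − f‖₁ ≥ ε. -/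
/-!
Push a normalized nonnegative `f ∈ ℓ¹(Yⁿ)` forward along the first coordinate projection,
`F y = ∑_{z₀ = y} f z`. The projection is equivariant, so `g • F` is the pushforward of `g • f`,
and summing `|g • f - f|` fibrewise shows `‖g • F - F‖₁ ≤ ‖g • f - f‖₁`. Since `F` is again a
normalized nonnegative function on `Y`, the hypothesis applies to it.
-/

noncomputable def fiberSum {X Y : Type*} (p : X → Y) (f : X → ℝ) (y : Y) : ℝ :=
  ∑' x : p ⁻¹' {y}, f x

lemma fiberSum_nonneg {X Y : Type*} (p : X → Y) {f : X → ℝ} (hf : ∀ x, 0 ≤ f x) (y : Y) :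
    0 ≤ fiberSum p f y :=
  tsum_nonneg fun _ => hf _

lemma hasSum_fiberSum {X Y : Type*} (p : X → Y) {f : X → ℝ} (hf : Summable f) :
    HasSum (fiberSum p f) (∑' x, f x) :=
  hf.hasSum.tsum_fiberwise p

namespace MulAction

variable {G X Y : Type*} [Group G] [MulAction G X] [MulAction G Y]

section

variable {α : Type*} [AddCommMonoid α] [TopologicalSpace α]

lemma summable_comp_smul (g : G) {f : X → α} (hf : Summable f) :
    Summable fun x => f (g • x) :=
  (MulAction.toPerm g).summable_iff.mpr hf

lemma tsum_comp_smul (g : G) (f : X → α) : ∑' x, f (g • x) = ∑' x, f x :=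
  (MulAction.toPerm g).tsum_eq f

end

lemma fiberSum_comp_smul (p : X →[G] Y) (g : G) (f : X → ℝ) (y : Y) :
    fiberSum p (fun x => f (g • x)) y = fiberSum p f (g • y) := by
  let e : p ⁻¹' {y} ≃ p ⁻¹' {g • y} :=
    (MulAction.toPerm g).subtypeEquiv fun x => by
      simp [map_smul]
  exact e.tsum_eq fun x => f x

lemma abs_fiberSum_comp_smul_sub_le (p : X →[G] Y) (g : G) {f : X → ℝ} (hf : Summable f)
    (y : Y) :
    |fiberSum p f (g • y) - fiberSum p f y| ≤ fiberSum p (fun x => |f (g • x) - f x|) y := by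
  have hgf := summable_comp_smul g hf
  rw [← fiberSum_comp_smul]
  calc |fiberSum p (fun x => f (g • x)) y - fiberSum p f y|
      = ‖∑' x : p ⁻¹' {y}, (f (g • (x : X)) - f x)‖ := by
        rw [fiberSum, fiberSum, Real.norm_eq_abs]
        exact congrArg abs ((hgf.subtype _).tsum_sub (hf.subtype _)).symm
    _ ≤ ∑' x : p ⁻¹' {y}, ‖f (g • (x : X)) - f x‖ :=
        norm_tsum_le_tsum_norm ((hgf.sub hf).norm.subtype _)
    _ = fiberSum p (fun x => |f (g • x) - f x|) y := by
        simp only [Real.norm_eq_abs, fiberSum]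

lemma tsum_abs_fiberSum_comp_smul_sub_le (p : X →[G] Y) (g : G) {f : X → ℝ} (hf : Summable f) :
    ∑' y, |fiberSum p f (g • y) - fiberSum p f y| ≤ ∑' x, |f (g • x) - f x| := by
  have hfib := hasSum_fiberSum p ((summable_comp_smul g hf).sub hf).abs
  have hle := abs_fiberSum_comp_smul_sub_le p g hf
  rw [← hfib.tsum_eq]
  exact (Summable.of_nonneg_of_le (fun _ => abs_nonneg _) hle hfib.summable).tsum_le_tsum
    hle hfib.summable

lemma tsum_abs_comp_smul_sub_le (g : G) {f : X → ℝ} (hf0 : ∀ x, 0 ≤ f x) (hf : Summable f) :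
    ∑' x, |f (g • x) - f x| ≤ 2 * ∑' x, f x := by
  have hgf := summable_comp_smul g hf
  calc ∑' x, |f (g • x) - f x|
      ≤ ∑' x, (f (g • x) + f x) :=
        ((hgf.sub hf).abs).tsum_le_tsum
          (fun x => (abs_sub _ _).trans_eq <| by rw [abs_of_nonneg (hf0 _), abs_of_nonneg (hf0 _)])
          (hgf.add hf)
    _ = 2 * ∑' x, f x := by
        rw [hgf.tsum_add hf, tsum_comp_smul, two_mul]

end MulAction

open MulAction in
theorem ell_one_nonamenable_powers_general {G Y : Type*} [Group G] [MulAction G Y]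
    (Q : Set G) (ε : ℝ)
    (h : ∀ f : Y → ℝ, (∀ y, 0 ≤ f y) → Summable f → ∑' y, f y = 1 →
      ε ≤ ⨆ g : Q, ∑' y, |f ((g : G)⁻¹ • y) - f y|) :
    ∀ n : ℕ, 1 ≤ n → ∀ f : (Fin n → Y) → ℝ, (∀ y, 0 ≤ f y) → Summable f →
      ∑' y, f y = 1 →
      ε ≤ ⨆ g : Q, ∑' y : Fin n → Y, |f ((g : G)⁻¹ • y) - f y| := by
  intro n hn f hf0 hfs hf1
  let p : (Fin n → Y) →[G] Y := Pi.evalMulActionHom ⟨0, hn⟩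
  have hF := hasSum_fiberSum p hfs
  rw [hf1] at hF
  have hbdd : BddAbove (Set.range fun g : Q => ∑' y : Fin n → Y, |f ((g : G)⁻¹ • y) - f y|) :=
    ⟨2 * 1, Set.forall_mem_range.mpr fun g =>
      hf1 ▸ tsum_abs_comp_smul_sub_le _ hf0 hfs⟩
  exact (h _ (fiberSum_nonneg p hf0) hF.summable hF.tsum_eq).trans
    (ciSup_mono hbdd fun g => tsum_abs_fiberSum_comp_smul_sub_le p _ hfs)

/-- If a group action on `Y` moves every normalized nonnegative `ℓ¹` function by at least `ε`
along some element of `Q`, then the same holds for the diagonal action on `Yⁿ`, `n ≥ 1`. -/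
theorem ell_one_nonamenable_powers {G Y : Type*} [Group G] [MulAction G Y]
    (Q : Set G) (ε : ℝ) (hε : 0 < ε)
    (h : ∀ f : Y → ℝ, (∀ y, 0 ≤ f y) → Summable f → ∑' y, f y = 1 →
      ε ≤ ⨆ g : Q, ∑' y, |f ((g : G)⁻¹ • y) - f y|) :
    ∀ n : ℕ, 1 ≤ n → ∀ f : (Fin n → Y) → ℝ, (∀ y, 0 ≤ f y) → Summable f →
      ∑' y, f y = 1 →
      ε ≤ ⨆ g : Q, ∑' y : Fin n → Y, |f ((g : G)⁻¹ • y) - f y| :=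
  ell_one_nonamenable_powers_general Q ε h
end

section
/- Let G act on a set X and suppose there is ε > 0 and Q ⊆ G such that for every nonnegative f ∈ ℓ¹(X) with ‖f‖₁ = 1, sup_{g∈Q} ‖g·f − f‖₁ ≥ ε. Then for every f ∈ ℓ²(X) with ‖f‖₂ = 1, sup_{g∈Q} ‖g·f − f‖₂ ≥ ε/2. -/
/-!
For a unit vector `f` of `ℓ²(X)`, the function `|f|²` is a probability density in `ℓ¹(X)`, and
translating commutes with taking `|·|²`. Factoring `|u|² - |v|² = (|u| - |v|)(|u| + |v|)` and
applying Cauchy–Schwarz and Minkowski gives `‖g·|f|² - |f|²‖₁ ≤ ‖g·f - f‖₂ · ‖|g·f| + |f|‖₂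
≤ 2 ‖g·f - f‖₂`; the hypothesis applied to `|f|²` then gives the bound `ε / 2` for `f`.
-/

open Real

section CauchySchwarzMinkowski

variable {X : Type*} {a b : X → ℝ}

theorem summable_mul_and_tsum_mul_le_sqrt_mul_sqrt (ha : ∀ x, 0 ≤ a x) (hb : ∀ x, 0 ≤ b x)
    (ha₂ : Summable fun x => a x ^ 2) (hb₂ : Summable fun x => b x ^ 2) :
    (Summable fun x => a x * b x) ∧
      ∑' x, a x * b x ≤ √(∑' x, a x ^ 2) * √(∑' x, b x ^ 2) := by
  simp_rw [sqrt_eq_rpow, ← rpow_two] at *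
  exact summable_and_inner_le_Lp_mul_Lq_tsum_of_nonneg .two_two ha hb ha₂ hb₂

theorem summable_add_sq_and_sqrt_tsum_add_sq_le (ha : ∀ x, 0 ≤ a x) (hb : ∀ x, 0 ≤ b x)
    (ha₂ : Summable fun x => a x ^ 2) (hb₂ : Summable fun x => b x ^ 2) :
    (Summable fun x => (a x + b x) ^ 2) ∧
      √(∑' x, (a x + b x) ^ 2) ≤ √(∑' x, a x ^ 2) + √(∑' x, b x ^ 2) := by
  simp_rw [sqrt_eq_rpow, ← rpow_two] at *
  exact Lp_add_le_tsum_of_nonneg one_le_two ha hb ha₂ hb₂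

end CauchySchwarzMinkowski

section NormSq

variable {X E : Type*} [SeminormedAddCommGroup E] {u v : X → E}

theorem summable_norm_sub_sq_and_sqrt_tsum_norm_sub_sq_le
    (hu : Summable fun x => ‖u x‖ ^ 2) (hv : Summable fun x => ‖v x‖ ^ 2) :
    (Summable fun x => ‖u x - v x‖ ^ 2) ∧
      √(∑' x, ‖u x - v x‖ ^ 2) ≤ √(∑' x, ‖u x‖ ^ 2) + √(∑' x, ‖v x‖ ^ 2) := by
  obtain ⟨hsum, hle⟩ :=
    summable_add_sq_and_sqrt_tsum_add_sq_le (fun _ => norm_nonneg _) (fun _ => norm_nonneg _) hu hv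
  have hpt : ∀ x, ‖u x - v x‖ ^ 2 ≤ (‖u x‖ + ‖v x‖) ^ 2 := fun x =>
    pow_le_pow_left₀ (norm_nonneg _) (norm_sub_le _ _) 2
  have hsub : Summable fun x => ‖u x - v x‖ ^ 2 :=
    hsum.of_nonneg_of_le (fun _ => sq_nonneg _) hpt
  exact ⟨hsub, (sqrt_le_sqrt (hsub.tsum_le_tsum hpt hsum)).trans hle⟩

theorem abs_norm_sq_sub_norm_sq_le (x y : E) :
    |‖x‖ ^ 2 - ‖y‖ ^ 2| ≤ ‖x - y‖ * (‖x‖ + ‖y‖) := by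
  rw [sq_sub_sq, abs_mul, abs_of_nonneg (by positivity : 0 ≤ ‖x‖ + ‖y‖), mul_comm]
  exact mul_le_mul_of_nonneg_right (abs_norm_sub_norm_le x y) (by positivity)

theorem tsum_abs_norm_sq_sub_norm_sq_le
    (hu : Summable fun x => ‖u x‖ ^ 2) (hv : Summable fun x => ‖v x‖ ^ 2) :
    ∑' x, |‖u x‖ ^ 2 - ‖v x‖ ^ 2| ≤
      √(∑' x, ‖u x - v x‖ ^ 2) * (√(∑' x, ‖u x‖ ^ 2) + √(∑' x, ‖v x‖ ^ 2)) := by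
  obtain ⟨hsub, -⟩ := summable_norm_sub_sq_and_sqrt_tsum_norm_sub_sq_le hu hv
  obtain ⟨hadd, hadd_le⟩ :=
    summable_add_sq_and_sqrt_tsum_add_sq_le (fun _ => norm_nonneg _) (fun _ => norm_nonneg _) hu hv
  obtain ⟨hmul, hcs⟩ := summable_mul_and_tsum_mul_le_sqrt_mul_sqrt
    (fun _ => norm_nonneg _) (fun _ => by positivity) hsub hadd
  calc ∑' x, |‖u x‖ ^ 2 - ‖v x‖ ^ 2|
      ≤ ∑' x, ‖u x - v x‖ * (‖u x‖ + ‖v x‖) :=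
        (hu.sub hv).abs.tsum_le_tsum (fun x => abs_norm_sq_sub_norm_sq_le _ _) hmul
    _ ≤ √(∑' x, ‖u x - v x‖ ^ 2) * √(∑' x, (‖u x‖ + ‖v x‖) ^ 2) := hcs
    _ ≤ √(∑' x, ‖u x - v x‖ ^ 2) * (√(∑' x, ‖u x‖ ^ 2) + √(∑' x, ‖v x‖ ^ 2)) :=
        mul_le_mul_of_nonneg_left hadd_le (sqrt_nonneg _)

end NormSq

section Translation

variable {G X E : Type*} [Group G] [MulAction G X] [SeminormedAddCommGroup E] {f : X → E}

theorem summable_norm_sq_comp_smul (g : G) (hf : Summable fun x => ‖f x‖ ^ 2) :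
    Summable fun x => ‖f (g • x)‖ ^ 2 :=
  (MulAction.toPerm g).summable_iff (f := fun x => ‖f x‖ ^ 2) |>.mpr hf

theorem tsum_norm_sq_comp_smul (g : G) :
    ∑' x, ‖f (g • x)‖ ^ 2 = ∑' x, ‖f x‖ ^ 2 :=
  (MulAction.toPerm g).tsum_eq fun x => ‖f x‖ ^ 2

theorem sqrt_tsum_norm_comp_smul_sub_sq_le_two (hf : Summable fun x => ‖f x‖ ^ 2)
    (hf₁ : ∑' x, ‖f x‖ ^ 2 = 1) (g : G) :
    √(∑' x, ‖f (g • x) - f x‖ ^ 2) ≤ 2 := by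
  have h := (summable_norm_sub_sq_and_sqrt_tsum_norm_sub_sq_le
    (summable_norm_sq_comp_smul g hf) hf).2
  rwa [tsum_norm_sq_comp_smul, hf₁, sqrt_one, one_add_one_eq_two] at h

theorem tsum_abs_norm_sq_comp_smul_sub_le (hf : Summable fun x => ‖f x‖ ^ 2)
    (hf₁ : ∑' x, ‖f x‖ ^ 2 = 1) (g : G) :
    ∑' x, |‖f (g • x)‖ ^ 2 - ‖f x‖ ^ 2| ≤ 2 * √(∑' x, ‖f (g • x) - f x‖ ^ 2) := by
  have h := tsum_abs_norm_sq_sub_norm_sq_le (summable_norm_sq_comp_smul g hf) hf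
  rwa [tsum_norm_sq_comp_smul, hf₁, sqrt_one, one_add_one_eq_two, mul_comm] at h

end Translation

theorem ell_two_from_ell_one_general {G X : Type*} [Group G] [MulAction G X]
    (Q : Set G) (ε : ℝ)
    (h : ∀ f : X → ℝ, (∀ x, 0 ≤ f x) → Summable f → ∑' x, f x = 1 →
      ε ≤ ⨆ g : Q, ∑' x, |f ((g : G)⁻¹ • x) - f x|) :
    ∀ f : X → ℂ, Summable (fun x => ‖f x‖ ^ 2) → ∑' x, ‖f x‖ ^ 2 = 1 →
      ε / 2 ≤ ⨆ g : Q, Real.sqrt (∑' x, ‖f ((g : G)⁻¹ • x) - f x‖ ^ 2) := by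
  intro f hf hf₁
  have hbdd : BddAbove (Set.range fun g : Q => 2 * √(∑' x, ‖f ((g : G)⁻¹ • x) - f x‖ ^ 2)) := by
    refine ⟨2 * 2, Set.forall_mem_range.mpr fun g => ?_⟩
    exact mul_le_mul_of_nonneg_left
      (sqrt_tsum_norm_comp_smul_sub_sq_le_two hf hf₁ _) zero_le_two
  have : ε ≤ 2 * ⨆ g : Q, √(∑' x, ‖f ((g : G)⁻¹ • x) - f x‖ ^ 2) :=
    calc ε ≤ ⨆ g : Q, ∑' x, |‖f ((g : G)⁻¹ • x)‖ ^ 2 - ‖f x‖ ^ 2| :=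
          h (fun x => ‖f x‖ ^ 2) (fun _ => sq_nonneg _) hf hf₁
      _ ≤ ⨆ g : Q, 2 * √(∑' x, ‖f ((g : G)⁻¹ • x) - f x‖ ^ 2) :=
          ciSup_mono hbdd fun g => tsum_abs_norm_sq_comp_smul_sub_le hf hf₁ _
      _ = 2 * ⨆ g : Q, √(∑' x, ‖f ((g : G)⁻¹ • x) - f x‖ ^ 2) :=
          (mul_iSup_of_nonneg zero_le_two _).symm
  linarith

/-- If a group action on `X` moves every normalized nonnegative `ℓ¹` function by at least `ε`
along some element of `Q`, then it moves every unit vector of `ℓ²(X)` by at least `ε/2`. -/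
theorem ell_two_from_ell_one {G X : Type*} [Group G] [MulAction G X]
    (Q : Set G) (ε : ℝ) (hε : 0 < ε)
    (h : ∀ f : X → ℝ, (∀ x, 0 ≤ f x) → Summable f → ∑' x, f x = 1 →
      ε ≤ ⨆ g : Q, ∑' x, |f ((g : G)⁻¹ • x) - f x|) :
    ∀ f : X → ℂ, Summable (fun x => ‖f x‖ ^ 2) → ∑' x, ‖f x‖ ^ 2 = 1 →
      ε / 2 ≤ ⨆ g : Q, Real.sqrt (∑' x, ‖f ((g : G)⁻¹ • x) - f x‖ ^ 2) :=
  ell_two_from_ell_one_general Q ε h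
end
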